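/- arXiv:2601.20322 — 4 statements merged into one kernel-verified Lean document; each statement's English description precedes it below -/
import Mathlib

section
/- Let C be a category and β : C ⥤ Arrow C a functor such that β ⋙ Arrow.leftFunc = 𝟭 C (the domain of β.obj a is a, and the domain component of β.map f is f). Write u := β ⋙ Arrow.rightFunc : C ⥤ C and, for each object a, β_a := (β.obj a).hom : a ⟶ u.obj a. Assume the comultiplication condition β ⋙ Functor.mapArrow β = β ⋙ δ, where δ : Arrow C ⥤ Arrow (Arrow C) is the functor sending an object f : x ⟶ y of Arrow C to the object of Arrow (Arrow C) given by the square (f, 𝟙 y) : Arrow.mk f ⟶ Arrow.mk (𝟙 y), and sending a morphism (h₀, h₁) : f ⟶ g to the corresponding morphism of squares with components ((h₀, h₁), (h₁, h₁)). Then: (1) for every object a, (β.obj (u.obj a)).hom = 𝟙 (u.obj a) and u.map β_a = 𝟙 (u.obj a); (2) u.obj (u.obj a) = u.obj a for every object a; and (3) u.map (u.map f) = u.map f for every morphism f of C. In other words, u is an idempotent functor and (u, 𝟙 : u ⋙ u = u, β) is an (idempotent) monad on C. -/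
/-! Every claim is a component of the comultiplication law `β ⋙ 𝔸(β) = β ⋙ δ`, with
`u := β ⋙ Arrow.rightFunc`: at an object `a`, the codomain of the square is `β (u a)` on one
side and `𝟙 (u a)` on the other, and its codomain edge is `u.map β_a` resp. `𝟙 (u a)`; at a
morphism `f`, the right-right component is `u.map (u.map f)` resp. `u.map f`. -/

open CategoryTheory

universe v u

variable {C : Type u} [Category.{v} C]

/-- The comultiplication `δ` of the arrow comonad. -/
def deltaFunctor (C : Type u) [Category.{v} C] : Arrow C ⥤ Arrow (Arrow C) where
  obj f := Arrow.mk
    (Arrow.homMk (f := f) (g := Arrow.mk (𝟙 f.right)) (u := f.hom) (v := 𝟙 f.right) (by simp))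
  map {f g} S := Arrow.homMk
    (u := S) (v := Arrow.homMk (u := S.right) (v := S.right) (by simp))
    (by ext <;> simp)
  map_id f := by ext <;> simp
  map_comp S T := by ext <;> simp

namespace ArrowCoalgebra

variable {β : C ⥤ Arrow C}

theorem obj_rightFunc_obj_eq_mk_id (hcomult : β ⋙ β.mapArrow = β ⋙ deltaFunctor C) (a : C) :
    β.obj ((β ⋙ Arrow.rightFunc).obj a) = Arrow.mk (𝟙 ((β ⋙ Arrow.rightFunc).obj a)) :=
  congrArg (fun F : C ⥤ Arrow (Arrow C) => (F.obj a).right) hcomult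

theorem mk_rightFunc_map_hom_eq_mk_id (hcomult : β ⋙ β.mapArrow = β ⋙ deltaFunctor C) (a : C) :
    Arrow.mk ((β ⋙ Arrow.rightFunc).map (β.obj a).hom) =
      Arrow.mk (𝟙 ((β ⋙ Arrow.rightFunc).obj a)) :=
  congrArg (fun F : C ⥤ Arrow (Arrow C) => Arrow.mk (F.obj a).hom.right) hcomult

theorem rightFunc_obj_idem (hcomult : β ⋙ β.mapArrow = β ⋙ deltaFunctor C) (a : C) :
    (β ⋙ Arrow.rightFunc).obj ((β ⋙ Arrow.rightFunc).obj a) = (β ⋙ Arrow.rightFunc).obj a :=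
  (congrArg Comma.right (obj_rightFunc_obj_eq_mk_id hcomult a)).trans rfl

theorem mk_rightFunc_map_idem (hcomult : β ⋙ β.mapArrow = β ⋙ deltaFunctor C) {a b : C}
    (f : a ⟶ b) :
    Arrow.mk ((β ⋙ Arrow.rightFunc).map ((β ⋙ Arrow.rightFunc).map f)) =
      Arrow.mk ((β ⋙ Arrow.rightFunc).map f) :=
  congrArg (fun F : C ⥤ Arrow (Arrow C) => Arrow.mk (F.map f).right.right) hcomult

end ArrowCoalgebra

theorem stmt1_general (β : C ⥤ Arrow C)
    (hcomult : β ⋙ Functor.mapArrow β = β ⋙ deltaFunctor C) :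
    (∀ a : C,
      β.obj ((β ⋙ Arrow.rightFunc).obj a) =
          Arrow.mk (𝟙 ((β ⋙ Arrow.rightFunc).obj a)) ∧
      Arrow.mk ((β ⋙ Arrow.rightFunc).map (β.obj a).hom) =
          Arrow.mk (𝟙 ((β ⋙ Arrow.rightFunc).obj a))) ∧
    (∀ a : C,
      (β ⋙ Arrow.rightFunc).obj ((β ⋙ Arrow.rightFunc).obj a) =
        (β ⋙ Arrow.rightFunc).obj a) ∧
    (∀ {a b : C} (f : a ⟶ b),
      Arrow.mk ((β ⋙ Arrow.rightFunc).map ((β ⋙ Arrow.rightFunc).map f)) =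
        Arrow.mk ((β ⋙ Arrow.rightFunc).map f)) :=
  ⟨fun a => ⟨ArrowCoalgebra.obj_rightFunc_obj_eq_mk_id hcomult a,
      ArrowCoalgebra.mk_rightFunc_map_hom_eq_mk_id hcomult a⟩,
    ArrowCoalgebra.rightFunc_obj_idem hcomult, ArrowCoalgebra.mk_rightFunc_map_idem hcomult⟩

/-- If `β : C ⥤ Arrow C` is a coalgebra structure for the arrow comonad (i.e. satisfies the
counit condition `β ⋙ Arrow.leftFunc = 𝟭 C` and the comultiplication condition
`β ⋙ 𝔸(β) = β ⋙ δ`), then, writing `u := β ⋙ Arrow.rightFunc`: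
(1) `β` at `u.obj a` is the identity arrow of `u.obj a`, and `u.map` of the structure morphism
`(β.obj a).hom` is the identity of `u.obj a`;
(2) `u` is idempotent on objects; and
(3) `u` is idempotent on morphisms.
(Equalities of morphisms with possibly different, but provably equal, end points are
expressed as equalities of the corresponding objects `Arrow.mk _` of the arrow category.)
In other words, `u` is an idempotent functor and `(u, 𝟙, β)` is a monad on `C`. -/
theorem stmt1 (β : C ⥤ Arrow C)
    (hcounit : β ⋙ Arrow.leftFunc = 𝟭 C)
    (hcomult : β ⋙ Functor.mapArrow β = β ⋙ deltaFunctor C) :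
    (∀ a : C,
      β.obj ((β ⋙ Arrow.rightFunc).obj a) =
          Arrow.mk (𝟙 ((β ⋙ Arrow.rightFunc).obj a)) ∧
      Arrow.mk ((β ⋙ Arrow.rightFunc).map (β.obj a).hom) =
          Arrow.mk (𝟙 ((β ⋙ Arrow.rightFunc).obj a))) ∧
    (∀ a : C,
      (β ⋙ Arrow.rightFunc).obj ((β ⋙ Arrow.rightFunc).obj a) =
        (β ⋙ Arrow.rightFunc).obj a) ∧
    (∀ {a b : C} (f : a ⟶ b),
      Arrow.mk ((β ⋙ Arrow.rightFunc).map ((β ⋙ Arrow.rightFunc).map f)) =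
        Arrow.mk ((β ⋙ Arrow.rightFunc).map f)) :=
  stmt1_general β hcomult
end

section
/- Let C be a pointed category (zero object and induced zero morphisms). The following are equivalent: (i) every morphism of C has a kernel; (ii) there exist a functor K : Arrow C ⥤ C and a natural transformation κ : K ⟶ Arrow.leftFunc such that (a) for every object f of Arrow C, f.hom ∘ κ.app f = 0; (b) for every object a of C, the component κ.app (Arrow.mk (0 : a ⟶ 0)) : K.obj (Arrow.mk (0 : a ⟶ 0)) ⟶ a is an isomorphism; and (c) for every object f of Arrow C, K.map of the morphism of arrows (κ.app f, 0) : Arrow.mk (0 : K.obj f ⟶ 0) ⟶ f equals the component κ.app (Arrow.mk (0 : K.obj f ⟶ 0)) : K.obj (Arrow.mk (0 : K.obj f ⟶ 0)) ⟶ K.obj f. -/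
/-!
Given kernels, `K = ker` with `κ = ker.ι` works. Conversely, naturality of `κ` along the morphism
of arrows `(g, 0) : (0 : W ⟶ 0) ⟶ f`, for `g ≫ f.hom = 0`, gives
`K.map (g, 0) ≫ κ.app f = κ.app (0 : W ⟶ 0) ≫ g`, so `g` factors through `κ.app f` because
`κ.app (0 : W ⟶ 0)` is invertible. Condition (c) makes `κ.app f` a monomorphism, hence the
factorisation unique: it rewrites `κ.app (0 : W ⟶ 0) ≫ u` as `K.map (u ≫ κ.app f, 0)`.
-/

open CategoryTheory CategoryTheory.Limits ZeroObject

universe v u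

noncomputable section

namespace CategoryTheory

variable {C : Type u} [Category.{v} C] [HasZeroObject C] [HasZeroMorphisms C]

abbrev Arrow.homMkFromZero {W : C} (f : Arrow C) (g : W ⟶ f.left) (hg : g ≫ f.hom = 0) :
    Arrow.mk (0 : W ⟶ 0) ⟶ f :=
  Arrow.homMk g 0 (by simpa using hg)

namespace Limits

lemma ker_map_homMkFromZero_kernelι [HasKernels C] (f : Arrow C) :
    (ker C).map (Arrow.homMkFromZero f (kernel.ι f.hom) (kernel.condition f.hom)) =
      kernel.ι (0 : kernel f.hom ⟶ 0) :=
  equalizer.hom_ext (kernel.lift_ι _ _ _)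

section KernelData

variable {K : Arrow C ⥤ C} (κ : K ⟶ Arrow.leftFunc)

lemma map_homMkFromZero_comp_app {W : C} (f : Arrow C) (g : W ⟶ f.left)
    (hg : g ≫ f.hom = 0) :
    K.map (Arrow.homMkFromZero f g hg) ≫ κ.app f = κ.app (Arrow.mk (0 : W ⟶ 0)) ≫ g :=
  κ.naturality _

variable {κ} (h0 : ∀ f : Arrow C, κ.app f ≫ f.hom = 0)
  (hc : ∀ f : Arrow C, K.map (Arrow.homMkFromZero f (κ.app f) (h0 f)) =
    κ.app (Arrow.mk (0 : K.obj f ⟶ 0)))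
include hc

lemma app_zero_comp_eq_map_homMkFromZero {W : C} (f : Arrow C) (u : W ⟶ K.obj f) :
    κ.app (Arrow.mk (0 : W ⟶ 0)) ≫ u =
      K.map (Arrow.homMkFromZero f (u ≫ κ.app f)
        ((Category.assoc _ _ _).trans ((u ≫= h0 f).trans comp_zero))) :=
  (map_homMkFromZero_comp_app κ (Arrow.mk (0 : K.obj f ⟶ 0)) u (by simp)).symm.trans <| by
    rw [← hc f]
    exact (K.map_comp _ _).symm.trans (congrArg K.map (Arrow.hom_ext _ _ rfl (by simp)))

lemma mono_app (hiso : ∀ a : C, IsIso (κ.app (Arrow.mk (0 : a ⟶ 0)))) (f : Arrow C) :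
    Mono (κ.app f) where
  right_cancellation {W} u v huv := by
    have := hiso W
    apply (cancel_epi (κ.app (Arrow.mk (0 : W ⟶ 0)))).1
    refine (app_zero_comp_eq_map_homMkFromZero h0 hc f u).trans
      (Eq.trans ?_ (app_zero_comp_eq_map_homMkFromZero h0 hc f v).symm)
    congr 2

def isLimitKernelForkApp (hiso : ∀ a : C, IsIso (κ.app (Arrow.mk (0 : a ⟶ 0)))) (f : Arrow C) :
    IsLimit (KernelFork.ofι (κ.app f) (h0 f)) := by
  have := mono_app h0 hc hiso f
  refine KernelFork.IsLimit.ofι' _ _ fun {W} g hg => ?_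
  have := hiso W
  exact ⟨(asIso (κ.app (Arrow.mk (0 : W ⟶ 0)))).inv ≫ K.map (Arrow.homMkFromZero f g hg),
    (Category.assoc _ _ _).trans
      ((_ ≫= map_homMkFromZero_comp_app κ f g hg).trans (Iso.inv_hom_id_assoc _ _))⟩

end KernelData

end Limits

end CategoryTheory

end

/-- For a pointed category `C` (zero object and induced zero morphisms), the following are
equivalent: (i) every morphism of `C` has a kernel; (ii) there are a functor
`K : Arrow C ⥤ C` and a natural transformation `κ : K ⟶ Arrow.leftFunc` such that
(a) `κ.app f ≫ f.hom = 0` for every object `f` of `Arrow C`;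
(b) `κ.app (Arrow.mk (0 : a ⟶ 0))` is an isomorphism for every object `a` of `C`; and
(c) for every `f`, `K.map` of the morphism of arrows
`(κ.app f, 0) : Arrow.mk (0 : K.obj f ⟶ 0) ⟶ f` equals
`κ.app (Arrow.mk (0 : K.obj f ⟶ 0))`. -/
theorem stmt3 (C : Type u) [Category.{v} C] [HasZeroObject C] [HasZeroMorphisms C] :
    HasKernels C ↔
      ∃ (K : Arrow C ⥤ C) (κ : K ⟶ Arrow.leftFunc)
        (h0 : ∀ f : Arrow C, κ.app f ≫ f.hom = 0),
        (∀ a : C, IsIso (κ.app (Arrow.mk (0 : a ⟶ 0)))) ∧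
        (∀ f : Arrow C,
          K.map (Arrow.homMk (f := Arrow.mk (0 : K.obj f ⟶ 0)) (g := f)
              (u := κ.app f) (v := (0 : (0 : C) ⟶ f.right)) (by simp; exact h0 f)) =
            κ.app (Arrow.mk (0 : K.obj f ⟶ 0))) := by
  constructor
  · intro _
    exact ⟨ker C, ker.ι C, fun f => kernel.condition f.hom,
      fun a => kernel.ι_zero_isIso, ker_map_homMkFromZero_kernelι⟩
  · rintro ⟨K, κ, h0, hiso, hc⟩
    exact ⟨fun f => ⟨⟨_, isLimitKernelForkApp h0 hc hiso (Arrow.mk f)⟩⟩⟩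
end

section
/- For every category C and every n ≥ 0, let N^w_n(C) be the wide subcategory of the category of chains of n composable morphisms in C (functors Fin (n+1) ⥤ C, i.e. ComposableArrows C n, with natural transformations as morphisms) whose morphisms are those natural transformations (commutative ladders) φ such that the components φ_1, …, φ_n at vertices 1, …, n are identities (only φ_0 may be nontrivial). Let 𝔻(C) := Σ (a : C), Over a denote the décalage of C, the disjoint union of the slice categories C/a with the sigma category structure. Then there is an isomorphism of categories N^w_n(C) ≅ 𝔻ⁿ(C) (the n-fold iterate of 𝔻 applied to C), and these isomorphisms are natural in C. -/
open CategoryTheory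

universe u

/-- Morphisms of the wide subcategory `N^w_n(C)` of `ComposableArrows C n`: ladders `φ` whose
components at the vertices `1, …, n` are identities (only `φ_0` may be nontrivial). -/
def NwHom {n : ℕ} {C : Type u} [Category.{u} C] (X Y : ComposableArrows C n) : Type u :=
  {φ : X ⟶ Y // ∀ i : Fin (n + 1), i ≠ 0 → ∃ h : X.obj i = Y.obj i, φ.app i = eqToHom h}

/-- `N^w_n(C)`: the wide subcategory of `ComposableArrows C n` (chains of `n` composable
morphisms of `C`) whose morphisms are the ladders whose components at `1, …, n` are
identities. -/
def Nw (n : ℕ) (C : Type u) [Category.{u} C] : Type u := ComposableArrows C n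

instance (n : ℕ) (C : Type u) [Category.{u} C] : Category.{u} (Nw n C) where
  Hom X Y := NwHom X Y
  id X := ⟨𝟙 _, fun i _ => ⟨rfl, rfl⟩⟩
  comp φ ψ := ⟨φ.1 ≫ ψ.1, fun i hi => by
    obtain ⟨h1, e1⟩ := φ.2 i hi
    obtain ⟨h2, e2⟩ := ψ.2 i hi
    exact ⟨h1.trans h2, by
      show φ.1.app i ≫ ψ.1.app i = _
      rw [e1, e2, eqToHom_trans]⟩⟩
  id_comp φ := Subtype.ext (by exact Category.id_comp _)
  comp_id φ := Subtype.ext (by exact Category.comp_id _)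
  assoc φ ψ χ := Subtype.ext (by exact Category.assoc _ _ _)

/-- The functor `N^w_n(C) ⥤ N^w_n(D)` induced by a functor `F : C ⥤ D`. -/
def NwMap (n : ℕ) {C D : Type u} [Category.{u} C] [Category.{u} D] (F : C ⥤ D) :
    Nw n C ⥤ Nw n D where
  obj X := X ⋙ F
  map {X Y} φ := ⟨Functor.whiskerRight φ.1 F, fun i hi => by
    obtain ⟨h, e⟩ := φ.2 i hi
    exact ⟨congrArg F.obj h, by
      show F.map (φ.1.app i) = _
      rw [e, eqToHom_map]⟩⟩
  map_id X := Subtype.ext (by ext i; exact F.map_id _)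
  map_comp φ ψ := Subtype.ext (by ext i; exact F.map_comp _ _)

/-- The décalage `𝔻(C) = Σ (a : C), C/a` of a category `C`: the disjoint union of the slice
categories of `C`, with the sigma category structure. -/
def Dec (C : Type u) [Category.{u} C] : Type u := Σ a : C, Over a

instance (C : Type u) [Category.{u} C] : Category.{u} (Dec C) :=
  inferInstanceAs (Category.{u} (Σ a : C, Over a))

/-- The functor `𝔻(C) ⥤ 𝔻(D)` induced by a functor `F : C ⥤ D`. -/
def decMap {C D : Type u} [Category.{u} C] [Category.{u} D] (F : C ⥤ D) : Dec C ⥤ Dec D :=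
  Sigma.desc (fun a =>
    Over.post F ⋙ (Sigma.incl (F.obj a) : Over (F.obj a) ⥤ Σ b : D, Over b))

/-- The `n`-fold iterate `𝔻ⁿ(C)` of the décalage. -/
def decIter : ℕ → Cat.{u, u} → Cat.{u, u}
  | 0, C => C
  | (n + 1), C => Cat.of (Dec (decIter n C))

/-- The action of `𝔻ⁿ` on functors. -/
def decIterMap : (n : ℕ) → {C D : Cat.{u, u}} → (C ⟶ D) → (decIter n C ⟶ decIter n D)
  | 0, _, _, F => F
  | (n + 1), _, _, F => (decMap (decIterMap n F).toFunctor).toCatHom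

/-!
A morphism `u : b ⟶ a` of `N^w_n(C)` is the identity at the vertices `1, …, n`, so `b` is `a` with
`a₀` replaced by `b₀`, and `u` is determined by `u₀ : b₀ ⟶ a₀`. Hence an object `(a, u)` of
`𝔻(N^w_n C)` is the same as the chain `b₀ ⟶ a₀ ⟶ a₁ ⟶ ⋯ ⟶ aₙ`, and a morphism `(a, u) ⟶ (a, u')`
over `a` the same as a ladder between these chains that is the identity away from vertex `0`.
Prepending `u₀` is thus an isomorphism `𝔻(N^w_n C) ≅ N^w_{n+1}(C)`, natural in `C`. Together with
`N^w_0(C) ≅ C`, induction on `n` gives the natural isomorphisms `N^w_n(C) ≅ 𝔻ⁿ(C)`.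
-/

namespace CategoryTheory

universe v

open ComposableArrows

def IsoCat.toCatIso {C D : Type u} [Category.{v} C] [Category.{v} D] (e : IsoCat C D) :
    Cat.of C ≅ Cat.of D where
  hom := e.functor.toCatHom
  inv := e.inverse.toCatHom
  hom_inv_id := congrArg Functor.toCatHom e.unit_eq.symm
  inv_hom_id := congrArg Functor.toCatHom e.counit_eq

lemma Over.mk_eqToHom_comp {T : Type*} [Category T] {X Y Z : T} (h : X = Y) (f : Y ⟶ Z) :
    Over.mk (eqToHom h ≫ f) = Over.mk f := by
  subst h
  simp

lemma decMap_id (C : Type u) [Category.{u} C] : decMap (𝟭 C) = 𝟭 (Dec C) := by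
  refine Functor.ext (fun _ => rfl) ?_
  rintro _ _ ⟨g⟩
  exact (Category.id_comp _).trans (Category.comp_id _) |>.symm

lemma decMap_comp {C D E : Type u} [Category.{u} C] [Category.{u} D] [Category.{u} E]
    (F : C ⥤ D) (G : D ⥤ E) : decMap (F ⋙ G) = decMap F ⋙ decMap G := by
  refine Functor.ext (fun _ => rfl) ?_
  rintro _ _ ⟨g⟩
  exact (Category.id_comp _).trans (Category.comp_id _) |>.symm

def decFunctor : Cat.{u, u} ⥤ Cat.{u, u} where
  obj C := Cat.of (Dec C)
  map F := (decMap F.toFunctor).toCatHom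
  map_id C := congrArg Functor.toCatHom (decMap_id C)
  map_comp F G := congrArg Functor.toCatHom (decMap_comp F.toFunctor G.toFunctor)

def decIterFunctor (n : ℕ) : Cat.{u, u} ⥤ Cat.{u, u} where
  obj := decIter n
  map := decIterMap n
  map_id C := by
    induction n with
    | zero => rfl
    | succ n ih => exact (congrArg decFunctor.map ih).trans (decFunctor.map_id _)
  map_comp F G := by
    induction n with
    | zero => rfl
    | succ n ih => exact (congrArg decFunctor.map ih).trans (decFunctor.map_comp _ _)

def nwFunctor (n : ℕ) : Cat.{u, u} ⥤ Cat.{u, u} where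
  obj C := Cat.of (Nw n C)
  map F := (NwMap n F.toFunctor).toCatHom

def skipOne (n : ℕ) : Fin (n + 1) ⥤ Fin (n + 2) where
  obj
    | ⟨0, _⟩ => ⟨0, by omega⟩
    | ⟨j + 1, _⟩ => ⟨j + 2, by omega⟩
  map {i j} f := homOfLE <| by
    obtain ⟨i, hi⟩ := i
    obtain ⟨j, hj⟩ := j
    have hij := Fin.mk_le_mk.mp (leOfHom f)
    rcases i with _ | i <;> rcases j with _ | j <;> exact Fin.mk_le_mk.mpr (by omega)

def skipOneToSucc (n : ℕ) : skipOne n ⟶ Fin.succFunctor (n + 1) where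
  app i := homOfLE <| by obtain ⟨_ | i, hi⟩ := i <;> exact Fin.mk_le_mk.mpr (by omega)
  naturality _ _ _ := Subsingleton.elim _ _

lemma skipOne_obj_ne_zero {n : ℕ} {i : Fin (n + 1)} (hi : i ≠ 0) : (skipOne n).obj i ≠ 0 := by
  induction i using Fin.cases with
  | zero => exact absurd rfl hi
  | succ i => exact Fin.ne_of_val_ne (Nat.succ_ne_zero (i.val + 1))

section

variable {C : Type u} [Category.{u} C] {n : ℕ}

namespace NwHom

lemma obj_eq {X Y : ComposableArrows C n} (φ : NwHom X Y) {i : Fin (n + 1)} (hi : i ≠ 0) :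
    X.obj i = Y.obj i :=
  (φ.2 i hi).1

lemma app_eq_eqToHom {X Y : ComposableArrows C n} (φ : NwHom X Y) {i : Fin (n + 1)}
    (hi : i ≠ 0) : φ.1.app i = eqToHom (φ.obj_eq hi) :=
  (φ.2 i hi).2

lemma map_heq {X Y : ComposableArrows C n} (φ : NwHom X Y) {i j : Fin (n + 1)} (f : i ⟶ j)
    (hi : i ≠ 0) (hj : j ≠ 0) : X.map f ≍ Y.map f := by
  have h := φ.1.naturality f
  rw [φ.app_eq_eqToHom hi, φ.app_eq_eqToHom hj] at h
  exact (comp_eqToHom_heq _ _).symm.trans ((heq_of_eq h).trans (eqToHom_comp_heq _ _))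

lemma ext {X Y : ComposableArrows C n} {φ ψ : NwHom X Y} (h : φ.1.app 0 = ψ.1.app 0) :
    φ = ψ := by
  refine Subtype.ext (NatTrans.ext (funext fun i => ?_))
  induction i using Fin.cases with
  | zero => exact h
  | succ i => rw [φ.app_eq_eqToHom i.succ_ne_zero, ψ.app_eq_eqToHom i.succ_ne_zero]

lemma δ₀_eq {X Y : ComposableArrows C (n + 1)} (φ : NwHom X Y) : X.δ₀ = Y.δ₀ :=
  Functor.hext (fun i => φ.obj_eq i.succ_ne_zero)
    (fun i j _ => φ.map_heq _ i.succ_ne_zero j.succ_ne_zero)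

lemma skipOne_comp_precomp_app_zero {X Y : ComposableArrows C n} (φ : NwHom X Y) :
    skipOne n ⋙ Y.precomp (φ.1.app 0) = X := by
  have hobj (i : Fin (n + 1)) : (skipOne n ⋙ Y.precomp (φ.1.app 0)).obj i = X.obj i := by
    induction i using Fin.cases with
    | zero => rfl
    | succ i => exact (φ.obj_eq i.succ_ne_zero).symm
  refine Functor.hext hobj fun i j f => ?_
  induction i using Fin.cases with
  | zero =>
    induction j using Fin.cases with
    | zero =>
      rw [Subsingleton.elim f (𝟙 _), Functor.map_id, Functor.map_id]
      rfl
    | succ j =>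
      have h := φ.1.naturality f
      rw [φ.app_eq_eqToHom j.succ_ne_zero] at h
      exact (heq_of_eq h.symm).trans (comp_eqToHom_heq _ _)
  | succ i =>
    induction j using Fin.cases with
    | zero => exact absurd (leOfHom f) (by simp)
    | succ j => exact (φ.map_heq f i.succ_ne_zero j.succ_ne_zero).symm

def whiskerSkipOne {X Y : ComposableArrows C (n + 1)} (ψ : NwHom X Y) :
    NwHom (skipOne n ⋙ X) (skipOne n ⋙ Y) :=
  ⟨Functor.whiskerLeft (skipOne n) ψ.1, fun _ hi => ψ.2 _ (skipOne_obj_ne_zero hi)⟩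

end NwHom

namespace Nw

lemma comp_app {X Y Z : Nw n C} (φ : X ⟶ Y) (ψ : Y ⟶ Z) (i : Fin (n + 1)) :
    (φ ≫ ψ).1.app i = φ.1.app i ≫ ψ.1.app i :=
  rfl

lemma eqToHom_app {X Y : Nw n C} (h : X = Y) (i : Fin (n + 1)) :
    (eqToHom h).1.app i = eqToHom (Functor.congr_obj h i) := by
  subst h
  rfl

def evalZero (C : Type u) [Category.{u} C] : Nw 0 C ⥤ C where
  obj X := X.obj 0
  map φ := φ.1.app 0

instance : (evalZero C).IsIso where
  faithful := ⟨fun h => NwHom.ext h⟩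
  full := ⟨fun f => ⟨⟨homMk₀ f, fun i hi => absurd (Fin.eq_zero i) hi⟩, rfl⟩⟩
  bijective_obj := ⟨fun _ _ h => ext₀ h, fun X => ⟨mk₀ X, rfl⟩⟩

-- `skipOne n ⋙ X` is `X₀ ⟶ X₂ ⟶ ⋯ ⟶ X_{n+1}`; `skipOneHom X` maps it to `X.δ₀` by `X₀ ⟶ X₁`.
def skipOneHom (X : ComposableArrows C (n + 1)) : NwHom (skipOne n ⋙ X) X.δ₀ :=
  ⟨Functor.whiskerRight (skipOneToSucc n) X, fun i hi => by
    induction i using Fin.cases with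
    | zero => exact absurd rfl hi
    | succ i => exact ⟨rfl, X.map_id _⟩⟩

def precompOver (a : Nw n C) : Over a ⥤ Nw (n + 1) C where
  obj u := a.precomp (u.hom.1.app 0)
  map {u v} g := ⟨homMkSucc (g.left.1.app 0) (𝟙 _) <| by
      have h := NatTrans.congr_app (congrArg Subtype.val (Over.w g)) 0
      exact (Category.comp_id _).trans h.symm,
    fun i hi => by
      induction i using Fin.cases with
      | zero => exact absurd rfl hi
      | succ i => exact ⟨rfl, rfl⟩⟩
  map_id _ := NwHom.ext rfl
  map_comp _ _ := NwHom.ext rfl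

def ofDec : Dec (Nw n C) ⥤ Nw (n + 1) C := Sigma.desc precompOver

def toDecObj (X : Nw (n + 1) C) : Dec (Nw n C) := ⟨X.δ₀, Over.mk (skipOneHom X)⟩

lemma over_mk_skipOneHom {a : Nw n C} (u : Over a) :
    Over.mk (skipOneHom (a.precomp (u.hom.1.app 0))) = u := by
  have h := u.hom.skipOne_comp_precomp_app_zero
  have : skipOneHom (a.precomp (u.hom.1.app 0)) = eqToHom (C := Nw n C) h ≫ u.hom := by
    refine NwHom.ext ?_
    erw [comp_app, eqToHom_app, eqToHom_refl, Category.id_comp]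
    rfl
  rw [this]
  exact Over.mk_eqToHom_comp (T := Nw n C) h u.hom

lemma toDecObj_ofDec_obj (p : Dec (Nw n C)) : toDecObj (ofDec.obj p) = p := by
  obtain ⟨a, u⟩ := p
  exact congrArg (Sigma.mk a) (over_mk_skipOneHom u)

lemma ofDec_obj_toDecObj (X : Nw (n + 1) C) : ofDec.obj (toDecObj X) = X := by
  refine ComposableArrows.ext_succ rfl rfl ?_
  erw [eqToHom_refl, eqToHom_refl, Category.id_comp, Category.comp_id]
  rfl

instance : (ofDec (n := n) (C := C)).Faithful where
  map_injective {p q} := by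
    rintro ⟨γ⟩ ⟨γ'⟩ h
    have h₀ := congrArg (fun χ : NwHom _ _ => χ.1.app 0) h
    congr 1
    exact Over.OverMorphism.ext (NwHom.ext h₀)

instance : (ofDec (n := n) (C := C)).Full where
  map_surjective {p q} ψ := by
    obtain ⟨a, u⟩ := p
    obtain ⟨a', u'⟩ := q
    obtain rfl : a = a' := ψ.δ₀_eq
    let γ : u.left ⟶ u'.left := eqToHom u.hom.skipOne_comp_precomp_app_zero.symm ≫
      ψ.whiskerSkipOne ≫ eqToHom u'.hom.skipOne_comp_precomp_app_zero
    have hγ : γ.1.app 0 = ψ.1.app 0 := by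
      erw [comp_app, comp_app, eqToHom_app, eqToHom_app, eqToHom_refl, eqToHom_refl,
        Category.id_comp, Category.comp_id]
      rfl
    refine ⟨Sigma.SigmaHom.mk (Over.homMk γ (NwHom.ext ?_)),
      NwHom.ext (by erw [Sigma.desc_map_mk]; exact hγ)⟩
    have h := ψ.1.naturality (homOfLE (show (0 : Fin (n + 2)) ≤ 1 by simp))
    rw [ψ.app_eq_eqToHom one_ne_zero] at h
    erw [eqToHom_refl, Category.comp_id] at h
    erw [comp_app, hγ]
    exact h.symm

instance : (ofDec (n := n) (C := C)).IsIso where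
  bijective_obj := Function.bijective_iff_has_inverse.mpr
    ⟨toDecObj, toDecObj_ofDec_obj, ofDec_obj_toDecObj⟩

end Nw

end

lemma Nw.ofDec_comp_nwMap {C D : Type u} [Category.{u} C] [Category.{u} D] {n : ℕ} (F : C ⥤ D) :
    Nw.ofDec ⋙ NwMap (n + 1) F = decMap (NwMap n F) ⋙ Nw.ofDec := by
  have hobj (p : Dec (Nw n C)) :
      (Nw.ofDec ⋙ NwMap (n + 1) F).obj p = (decMap (NwMap n F) ⋙ Nw.ofDec).obj p := by
    refine ComposableArrows.ext_succ rfl rfl ?_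
    erw [eqToHom_refl, eqToHom_refl, Category.id_comp, Category.comp_id]
    rfl
  refine Functor.ext hobj ?_
  rintro ⟨a, u⟩ ⟨_, v⟩ ⟨g⟩
  refine NwHom.ext ?_
  erw [Nw.comp_app, Nw.comp_app, Nw.eqToHom_app, Nw.eqToHom_app, eqToHom_refl, eqToHom_refl,
    Category.id_comp, Category.comp_id]
  rfl

noncomputable def Nw.ofDecNatIso (n : ℕ) : nwFunctor.{u} n ⋙ decFunctor ≅ nwFunctor (n + 1) :=
  NatIso.ofComponents (fun _ => Nw.ofDec.asIsomorphism.toCatIso)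
    fun F => Cat.ext (Nw.ofDec_comp_nwMap F.toFunctor).symm

noncomputable def nwIsoDecIter : (n : ℕ) → nwFunctor.{u} n ≅ decIterFunctor n
  | 0 => NatIso.ofComponents (fun C => (Nw.evalZero C).asIsomorphism.toCatIso) fun _ => rfl
  | n + 1 => (Nw.ofDecNatIso n).symm ≪≫ Functor.isoWhiskerRight (nwIsoDecIter n) decFunctor

end CategoryTheory

/-- For every category `C` and every `n ≥ 0` there is an isomorphism of categories
`N^w_n(C) ≅ 𝔻ⁿ(C)` (an isomorphism in `Cat`), and these isomorphisms are natural in `C`. -/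
theorem stmt9 (n : ℕ) :
    ∃ e : ∀ C : Cat.{u, u}, Cat.of (Nw n C) ≅ decIter n C,
      ∀ (C D : Cat.{u, u}) (F : C ⟶ D),
        ((NwMap n F.toFunctor).toCatHom ≫ (e D).hom : Cat.of (Nw n C) ⟶ decIter n D) =
          (e C).hom ≫ decIterMap n F :=
  ⟨(nwIsoDecIter n).app, fun _ _ F => (nwIsoDecIter n).hom.naturality F⟩
end

section
/- For every category C and every n ≥ 0, let Ñ^w_{n+1}(C) be the wide subcategory of ComposableArrows C (n+1) (chains of n+1 composable morphisms in C) whose morphisms are those natural transformations (commutative ladders) φ such that the last component φ_{n+1} is the identity. Let 𝔻(C) := Σ (a : C), Over a denote the décalage of C. Then there is an isomorphism of categories Ñ^w_{n+1}(C) ≅ ComposableArrows (𝔻(C)) n (the category of chains of n composable morphisms in 𝔻(C)), and these isomorphisms are natural in C. -/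
open CategoryTheory

universe u

/-- Morphisms of the wide subcategory `Ñ^w_{n+1}(C)` of `ComposableArrows C (n+1)`:
ladders `φ` whose last component `φ_{n+1}` is the identity. -/
def NtwHom {n : ℕ} {C : Type u} [Category.{u} C] (X Y : ComposableArrows C (n + 1)) :
    Type u :=
  {φ : X ⟶ Y // ∃ h : X.obj (Fin.last (n + 1)) = Y.obj (Fin.last (n + 1)),
      φ.app (Fin.last (n + 1)) = eqToHom h}

/-- `Ñ^w_{n+1}(C)`: the wide subcategory of `ComposableArrows C (n+1)` (chains of `n+1`
composable morphisms of `C`) whose morphisms are the ladders whose last component is the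
identity. -/
def Ntw (n : ℕ) (C : Type u) [Category.{u} C] : Type u := ComposableArrows C (n + 1)

instance (n : ℕ) (C : Type u) [Category.{u} C] : Category.{u} (Ntw n C) where
  Hom X Y := NtwHom X Y
  id X := ⟨𝟙 _, ⟨rfl, rfl⟩⟩
  comp φ ψ := ⟨φ.1 ≫ ψ.1, by
    obtain ⟨h1, e1⟩ := φ.2
    obtain ⟨h2, e2⟩ := ψ.2
    exact ⟨h1.trans h2, show φ.1.app _ ≫ ψ.1.app _ = _ by rw [e1, e2, eqToHom_trans]⟩⟩
  id_comp φ := Subtype.ext (Category.id_comp _)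
  comp_id φ := Subtype.ext (Category.comp_id _)
  assoc φ ψ χ := Subtype.ext (Category.assoc _ _ _)

/-- The functor `Ñ^w_{n+1}(C) ⥤ Ñ^w_{n+1}(D)` induced by a functor `F : C ⥤ D`. -/
def NtwMap (n : ℕ) {C D : Type u} [Category.{u} C] [Category.{u} D] (F : C ⥤ D) :
    Ntw n C ⥤ Ntw n D where
  obj X := X ⋙ F
  map {X Y} φ := ⟨Functor.whiskerRight φ.1 F, by
    obtain ⟨h, e⟩ := φ.2
    exact ⟨congrArg F.obj h, show F.map (φ.1.app _) = _ by rw [e, eqToHom_map]⟩⟩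
  map_id X := Subtype.ext (by ext i; exact F.map_id _)
  map_comp φ ψ := Subtype.ext (by ext i; exact F.map_comp _ _)

/-! The functor `decalage` sends a chain `X₀ → ⋯ → Xₙ → Xₙ₊₁` to the chain of slices
`(Xₙ₊₁, Xᵢ → Xₙ₊₁)` in `Dec C`. Ladders of `Ñ^w` fix `Xₙ₊₁`, so they are exactly the ladders of
slices over it: the functor is full and faithful, and it is bijective on objects (for
surjectivity, peel off the first arrow of a chain with `precomp` and induct on `n`). Hence it is
an isomorphism of categories, and it commutes on the nose with the functoriality in `C`. -/

namespace Dec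

variable {C D : Type u} [Category.{u} C] [Category.{u} D]

variable (C) in
def forget : Dec C ⥤ C :=
  Sigma.desc fun a => Over.forget a

theorem fst_eq_of_hom {p q : Dec C} (m : p ⟶ q) : p.1 = q.1 := by
  rcases m with ⟨f⟩
  rfl

theorem forget_map_comp_hom {p q : Dec C} (m : p ⟶ q) :
    (forget C).map m ≫ q.2.hom = p.2.hom ≫ eqToHom (fst_eq_of_hom m) := by
  rcases m with ⟨f⟩
  rw [eqToHom_refl, Category.comp_id]
  exact Over.w f

theorem hom_ext {p q : Dec C} {m m' : p ⟶ q} (h : (forget C).map m = (forget C).map m') :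
    m = m' := by
  rcases m with ⟨f⟩
  rcases m' with ⟨g⟩
  exact congrArg Sigma.SigmaHom.mk (Over.OverMorphism.ext h)

def homMk {p q : Dec C} (h : p.1 = q.1) (u : p.2.left ⟶ q.2.left)
    (w : u ≫ q.2.hom = p.2.hom ≫ eqToHom h) : p ⟶ q :=
  match p, q, h, u, w with
  | ⟨a, f⟩, ⟨_, g⟩, rfl, u, w => Sigma.SigmaHom.mk (Over.homMk u (by simpa using w))

@[simp]
theorem forget_map_homMk {p q : Dec C} (h : p.1 = q.1) (u : p.2.left ⟶ q.2.left) (w) :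
    (forget C).map (homMk h u w) = u := by
  obtain ⟨a, f⟩ := p
  obtain ⟨b, g⟩ := q
  obtain rfl : a = b := h
  rfl

theorem snd_hom_eq_of_eq {p q : Dec C} (h : p = q) :
    p.2.hom = eqToHom (congrArg (fun r : Dec C => r.2.left) h) ≫ q.2.hom ≫
      eqToHom (congrArg Sigma.fst h).symm := by
  subst h
  simp

@[simp]
theorem forget_map_decMap (F : C ⥤ D) {p q : Dec C} (m : p ⟶ q) :
    (forget D).map ((decMap F).map m) = F.map ((forget C).map m) := by
  rcases m with ⟨f⟩
  rfl

end Dec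

namespace NtwHom

variable {n : ℕ} {C : Type u} [Category.{u} C] {X Y : ComposableArrows C (n + 1)}

theorem obj_last_eq (φ : NtwHom X Y) : X.obj (Fin.last (n + 1)) = Y.obj (Fin.last (n + 1)) :=
  φ.2.fst

theorem app_last (φ : NtwHom X Y) : φ.1.app (Fin.last (n + 1)) = eqToHom φ.obj_last_eq :=
  φ.2.snd

end NtwHom

section Decalage

variable {n : ℕ} {C : Type u} [Category.{u} C]

/- Reducible, so that `((decalageObj X).obj i).1` is seen to be `X.right` when rewriting. -/
abbrev decalageObj (X : ComposableArrows C (n + 1)) : ComposableArrows (Dec C) n where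
  obj i := ⟨X.right, Over.mk (X.map (homOfLE (Fin.le_last i.castSucc)))⟩
  map f := Sigma.SigmaHom.mk
    (Over.homMk (X.map (homOfLE (Fin.castSucc_le_castSucc_iff.mpr (leOfHom f)))) (by
      simp [← X.map_comp]))
  map_id _ := congrArg Sigma.SigmaHom.mk (Over.OverMorphism.ext (X.map_id _))
  map_comp _ _ := congrArg Sigma.SigmaHom.mk (Over.OverMorphism.ext (X.map_comp _ _))

def decalageMap {X Y : ComposableArrows C (n + 1)} (φ : NtwHom X Y) :
    decalageObj X ⟶ decalageObj Y where
  app i := Dec.homMk φ.obj_last_eq (φ.1.app i.castSucc)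
    ((φ.1.naturality _).symm.trans (congrArg (_ ≫ ·) φ.app_last))
  naturality _ _ _ := Dec.hom_ext (by
    rw [Functor.map_comp, Functor.map_comp, Dec.forget_map_homMk, Dec.forget_map_homMk]
    exact φ.1.naturality _)

@[simp]
theorem forget_map_decalageMap_app {X Y : ComposableArrows C (n + 1)} (φ : NtwHom X Y)
    (i : Fin (n + 1)) :
    (Dec.forget C).map ((decalageMap φ).app i) = φ.1.app i.castSucc :=
  Dec.forget_map_homMk _ _ _

theorem decalageMap_injective {X Y : ComposableArrows C (n + 1)} :
    Function.Injective (decalageMap (X := X) (Y := Y)) := by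
  intro φ ψ h
  apply Subtype.ext
  ext j
  induction j using Fin.lastCases with
  | last => rw [NtwHom.app_last, NtwHom.app_last]
  | cast i =>
    have := congrArg (fun m => (Dec.forget C).map (NatTrans.app m i)) h
    rwa [forget_map_decalageMap_app, forget_map_decalageMap_app] at this

/- Stated with its type in terms of `X` and `Y`, so that `Fin.lastCases` below can be rewritten. -/
def decalageHomApp {X Y : ComposableArrows C (n + 1)} (ψ : decalageObj X ⟶ decalageObj Y)
    (i : Fin (n + 1)) : X.obj i.castSucc ⟶ Y.obj i.castSucc :=
  (Dec.forget C).map (ψ.app i)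

def ladderOfDecalageHom {X Y : ComposableArrows C (n + 1)} (ψ : decalageObj X ⟶ decalageObj Y) :
    X ⟶ Y where
  app j := Fin.lastCases (eqToHom (Dec.fst_eq_of_hom (ψ.app 0))) (decalageHomApp ψ) j
  naturality j k f := by
    induction k using Fin.lastCases with
    | last =>
      induction j using Fin.lastCases with
      | last => simp [Subsingleton.elim f (𝟙 _)]
      | cast i =>
        simp only [Fin.lastCases_castSucc, Fin.lastCases_last]
        exact (Dec.forget_map_comp_hom (ψ.app i)).symm
    | cast k =>
      induction j using Fin.lastCases with
      | last => exact absurd (leOfHom f) (Fin.castSucc_lt_last k).not_ge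
      | cast j =>
        simp only [Fin.lastCases_castSucc]
        have := congrArg (Dec.forget C).map
          (ψ.naturality (homOfLE (Fin.castSucc_le_castSucc_iff.mp (leOfHom f))))
        rwa [Functor.map_comp, Functor.map_comp] at this

theorem ladderOfDecalageHom_app_last {X Y : ComposableArrows C (n + 1)}
    (ψ : decalageObj X ⟶ decalageObj Y) :
    (ladderOfDecalageHom ψ).app (Fin.last (n + 1)) = eqToHom (Dec.fst_eq_of_hom (ψ.app 0)) :=
  Fin.lastCases_last (motive := fun j => X.obj j ⟶ Y.obj j)

theorem ladderOfDecalageHom_app_castSucc {X Y : ComposableArrows C (n + 1)}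
    (ψ : decalageObj X ⟶ decalageObj Y) (i : Fin (n + 1)) :
    (ladderOfDecalageHom ψ).app i.castSucc = (Dec.forget C).map (ψ.app i) :=
  Fin.lastCases_castSucc (motive := fun j => X.obj j ⟶ Y.obj j) (cast := decalageHomApp ψ) i

def decalagePreimage {X Y : ComposableArrows C (n + 1)} (ψ : decalageObj X ⟶ decalageObj Y) :
    NtwHom X Y :=
  ⟨ladderOfDecalageHom ψ, Dec.fst_eq_of_hom (ψ.app 0), ladderOfDecalageHom_app_last ψ⟩

theorem decalageMap_decalagePreimage {X Y : ComposableArrows C (n + 1)}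
    (ψ : decalageObj X ⟶ decalageObj Y) : decalageMap (decalagePreimage ψ) = ψ := by
  ext i
  apply Dec.hom_ext
  rw [forget_map_decalageMap_app]
  exact ladderOfDecalageHom_app_castSucc ψ i

theorem decalageObj_injective : Function.Injective (decalageObj (n := n) (C := C)) := by
  intro X Y h
  have hobj : ∀ j, X.obj j = Y.obj j := fun j => by
    induction j using Fin.lastCases with
    | last => exact congrArg (fun Z => (Z.obj 0).1) h
    | cast i => exact congrArg (fun Z => (Z.obj i).2.left) h
  refine ComposableArrows.ext hobj fun i hi => ?_
  rcases Nat.lt_or_ge i n with hin | hin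
  · have := congrArg (Dec.forget C).map
      (Functor.congr_hom h (homOfLE (show (⟨i, by omega⟩ : Fin (n + 1)) ≤ ⟨i + 1, by omega⟩ by
        simp [Fin.le_def])))
    rwa [Functor.map_comp, Functor.map_comp, eqToHom_map, eqToHom_map] at this
  · obtain rfl : n = i := by omega
    simpa using Dec.snd_hom_eq_of_eq (congrArg (fun Z => Z.obj (Fin.last n)) h)

end Decalage

theorem decalageObj_surjective {C : Type u} [Category.{u} C] :
    ∀ {n : ℕ}, Function.Surjective (decalageObj (n := n) (C := C))
  | 0, Y => by
    obtain ⟨⟨a, p⟩, rfl⟩ := ComposableArrows.mk₀_surjective Y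
    exact ⟨ComposableArrows.mk₁ p.hom, ComposableArrows.ext₀ rfl⟩
  | n + 1, Y => by
    obtain ⟨Y', ⟨a, ⟨l, ⟨⟨⟩⟩, hom⟩⟩, g, rfl⟩ := ComposableArrows.precomp_surjective Y
    obtain ⟨X', rfl⟩ := decalageObj_surjective Y'
    rcases g with ⟨⟨u, r, w⟩⟩
    change l ⟶ X'.obj 0 at u
    obtain rfl : u ≫ X'.map' 0 (n + 1) = hom := w.trans (Category.comp_id hom)
    -- the objects now agree definitionally, so both `eqToHom`s are identities
    exact ⟨X'.precomp u, ComposableArrows.ext_succ rfl rfl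
      ((Category.id_comp _).trans (Category.comp_id _)).symm⟩

def decalage (n : ℕ) (C : Type u) [Category.{u} C] : Ntw n C ⥤ ComposableArrows (Dec C) n where
  obj X := decalageObj X
  map φ := decalageMap φ
  map_id _ := by
    ext i
    exact Dec.hom_ext (forget_map_decalageMap_app _ _)
  map_comp _ _ := by
    ext i
    apply Dec.hom_ext
    exact (forget_map_decalageMap_app _ _).trans (Eq.symm ((Functor.map_comp _ _ _).trans
      (congrArg₂ (· ≫ ·) (forget_map_decalageMap_app _ _) (forget_map_decalageMap_app _ _))))

instance (n : ℕ) (C : Type u) [Category.{u} C] : (decalage n C).IsIso where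
  faithful := ⟨fun h => decalageMap_injective h⟩
  full := ⟨fun ψ => ⟨decalagePreimage ψ, decalageMap_decalagePreimage ψ⟩⟩
  bijective_obj := ⟨decalageObj_injective, decalageObj_surjective⟩

theorem ntwMap_comp_decalage (n : ℕ) {C D : Type u} [Category.{u} C] [Category.{u} D]
    (F : C ⥤ D) :
    NtwMap n F ⋙ decalage n D =
      decalage n C ⋙ (Functor.whiskeringRight (Fin (n + 1)) (Dec C) (Dec D)).obj (decMap F) := by
  refine CategoryTheory.Functor.ext (fun _ => rfl) fun X Y φ => ?_
  -- the objects agree definitionally, so both `eqToHom`s are identities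
  refine Eq.trans ?_ ((Category.id_comp _).trans (Category.comp_id _)).symm
  ext i
  apply Dec.hom_ext
  exact (forget_map_decalageMap_app _ i).trans
    ((congrArg F.map (forget_map_decalageMap_app φ i)).symm.trans (Dec.forget_map_decMap F _).symm)

def CategoryTheory.IsoCat.toCatIso_s11 {C D : Type u} [Category.{u} C] [Category.{u} D]
    (e : IsoCat C D) : Cat.of C ≅ Cat.of D where
  hom := e.functor.toCatHom
  inv := e.inverse.toCatHom
  hom_inv_id := congrArg Functor.toCatHom e.unit_eq.symm
  inv_hom_id := congrArg Functor.toCatHom e.counit_eq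

/-- For every category `C` and every `n ≥ 0` there is an isomorphism of categories
`Ñ^w_{n+1}(C) ≅ N_n(𝔻(C)) = ComposableArrows (𝔻(C)) n` (an isomorphism in `Cat`), and
these isomorphisms are natural in `C`.  This is the levelwise form of the isomorphism
`dec(Ñ^w(C))_• ≅ N_•(𝔻(C))`. -/
theorem stmt11 (n : ℕ) :
    ∃ e : ∀ C : Cat.{u, u}, Cat.of (Ntw n C) ≅ Cat.of (ComposableArrows (Dec C) n),
      ∀ (C D : Cat.{u, u}) (F : C ⟶ D),
        ((NtwMap n F.toFunctor).toCatHom ≫ (e D).hom :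
            Cat.of (Ntw n C) ⟶ Cat.of (ComposableArrows (Dec D) n)) =
          (e C).hom ≫
            ((Functor.whiskeringRight (Fin (n + 1)) (Dec C) (Dec D)).obj (decMap F.toFunctor)).toCatHom :=
  ⟨fun C => (decalage n C).asIsomorphism.toCatIso_s11,
    fun _ _ F => congrArg Functor.toCatHom (ntwMap_comp_decalage n F.toFunctor)⟩
end
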